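/- Let L be a reflective subuniverse of types presented by a family of maps {f_i : A_i → B_i}. Then each f_i is an L-equivalence; consequently, every map that is right orthogonal to all L-equivalences is right orthogonal to each f_i. -/

import Mathlib

universe u

/-- A reflective subuniverse of `Type u`: a predicate `IsLocal` on types, an
operation `L`, and unit maps `unit X : X → L X`, such that `L X` is local and
precomposition with the unit is a bijection into maps to any local type. -/
structure ReflSub : Type (u + 1) where
  IsLocal : Type u → Prop
  L : Type u → Type u
  unit : ∀ X : Type u, X → L X
  local_L : ∀ X : Type u, IsLocal (L X)
  univ : ∀ (X Z : Type u), IsLocal Z →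
    Function.Bijective (fun g : L X → Z => g ∘ unit X)

/-- The functorial action `L f : L A → L B`, the unique map with
`L f ∘ η_A = η_B ∘ f`. -/
noncomputable def ReflSub.map (R : ReflSub.{u}) {A B : Type u} (f : A → B) :
    R.L A → R.L B :=
  Function.surjInv (R.univ A (R.L B) (R.local_L B)).2 (R.unit B ∘ f)

/-- `f` is an `L`-equivalence if `L f` is a bijection. -/
def ReflSub.IsEquiv (R : ReflSub.{u}) {A B : Type u} (f : A → B) : Prop :=
  Function.Bijective (R.map f)

/-- `f : A → B` is left orthogonal to `g : X → Y` (equivalently, `g` is right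
orthogonal to `f`) if every commuting square from `f` to `g` admits a unique
diagonal filler. -/
def LeftOrth {A B X Y : Type u} (f : A → B) (g : X → Y) : Prop :=
  ∀ (u : A → X) (v : B → Y), g ∘ u = v ∘ f →
    ∃! d : B → X, d ∘ f = u ∧ g ∘ d = v

/-- The square with projections `pa : P → A`, `pb : P → B` over the cospan
`f : A → C`, `g : B → C` commutes and is a pullback square: the induced map
`P → A ×_C B` is a bijection. -/
def IsPullbackSq {P A B C : Type u} (pa : P → A) (pb : P → B)
    (f : A → C) (g : B → C) : Prop :=
  (∀ p, f (pa p) = g (pb p)) ∧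
    ∀ (a : A) (b : B), f a = g b → ∃! p : P, pa p = a ∧ pb p = b

/-- `f : A → B` is `L`-étale if its `L`-naturality square is a pullback square,
i.e. the induced map `A → B ×_{L B} L A` is a bijection. -/
def ReflSub.IsEtale (R : ReflSub.{u}) {A B : Type u} (f : A → B) : Prop :=
  IsPullbackSq f (R.unit A) (R.unit B) (R.map f)

/-- A map is `L`-local if each of its fibers is an `L`-local type. -/
def ReflSub.IsLocalMap (R : ReflSub.{u}) {X Y : Type u} (g : X → Y) : Prop :=
  ∀ y : Y, R.IsLocal {x : X // g x = y}

/-- A map is `L`-connected if `L` of each of its fibers has exactly one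
element. -/
def ReflSub.IsConnMap (R : ReflSub.{u}) {X Y : Type u} (g : X → Y) : Prop :=
  ∀ y : Y, ∃ z : R.L {x : X // g x = y}, ∀ w : R.L {x : X // g x = y}, w = z

/-- `L` is a modality if the `L`-local types are closed under dependent sums. -/
def ReflSub.IsModality (R : ReflSub.{u}) : Prop :=
  ∀ (X : Type u) (P : X → Type u), R.IsLocal X → (∀ x, R.IsLocal (P x)) →
    R.IsLocal (Σ x, P x)

/-- `L` is lex if applying `L` to any pullback square yields a pullback
square. -/
def ReflSub.IsLex (R : ReflSub.{u}) : Prop :=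
  ∀ (E' E B' B : Type u) (p' : E' → B') (g : E' → E) (f : B' → B) (p : E → B),
    IsPullbackSq p' g f p →
    IsPullbackSq (R.map p') (R.map g) (R.map f) (R.map p)

/-!
Since `L A` is local, `η_A` extends along `f` to some `s : B → L A`, and `s` extends along `η_B`
to `t : L B → L A`. Both composites of `t` with `L f` agree with the identity after precomposing
with a unit, hence are the identity: for `L f ∘ t` this uses that `L B` is local, so maps out
of `B` into it are determined by their restriction along `f`.
-/

open Function

namespace ReflSub

variable (R : ReflSub.{u})

lemma map_comp_unit {A B : Type u} (f : A → B) : R.map f ∘ R.unit A = R.unit B ∘ f :=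
  surjInv_eq (R.univ A (R.L B) (R.local_L B)).2 (R.unit B ∘ f)

lemma ext_unit {X Z : Type u} (hZ : R.IsLocal Z) {g h : R.L X → Z}
    (hgh : g ∘ R.unit X = h ∘ R.unit X) : g = h :=
  (R.univ X Z hZ).1 hgh

theorem isEquiv_of_bijective_comp {A B : Type u} (f : A → B)
    (hf : ∀ Z : Type u, R.IsLocal Z → Bijective (fun h : B → Z => h ∘ f)) :
    R.IsEquiv f := by
  obtain ⟨s, hs⟩ := (hf _ (R.local_L A)).2 (R.unit A)
  obtain ⟨t, ht⟩ := (R.univ B _ (R.local_L A)).2 s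
  dsimp only at hs ht
  have hmap := R.map_comp_unit f
  have hmap_s : R.map f ∘ s = R.unit B :=
    (hf _ (R.local_L B)).1 (by dsimp only; rw [comp_assoc, hs, hmap])
  have hleft : t ∘ R.map f = id :=
    R.ext_unit (R.local_L A) (by rw [comp_assoc, hmap, ← comp_assoc, ht, hs, id_comp])
  have hright : R.map f ∘ t = id :=
    R.ext_unit (R.local_L B) (by rw [comp_assoc, ht, hmap_s, id_comp])
  exact bijective_iff_has_inverse.2 ⟨t, congrFun hleft, congrFun hright⟩

end ReflSub

/-- If `L` is presented by a family of maps `f i : A i → B i`, then each `f i`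
is an `L`-equivalence; consequently any map right orthogonal to all
`L`-equivalences is right orthogonal to each `f i`. -/
theorem stmt_4 (R : ReflSub.{u}) (I : Type u) (A B : I → Type u)
    (f : ∀ i, A i → B i)
    (hpres : ∀ X : Type u, R.IsLocal X ↔
      ∀ i, Function.Bijective (fun h : B i → X => h ∘ f i)) :
    (∀ i, R.IsEquiv (f i)) ∧
    (∀ (X Y : Type u) (g : X → Y),
      (∀ (A' B' : Type u) (k : A' → B'), R.IsEquiv k → LeftOrth k g) →
      ∀ i, LeftOrth (f i) g) := by
  have hequiv : ∀ i, R.IsEquiv (f i) := fun i =>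
    R.isEquiv_of_bijective_comp (f i) fun Z hZ => (hpres Z).1 hZ i
  exact ⟨hequiv, fun X Y g hg i => hg _ _ (f i) (hequiv i)⟩
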